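/- arXiv:1806.00582 — 4 statements merged into one kernel-verified Lean document; each statement's English description precedes it below -/
import Mathlib

section
/- Let u, v ∈ W and let k be a client. Then ‖Σ_{i=1}^C p^k_i · G_i(u) − Σ_{i=1}^C p_i · G_i(v)‖ ≤ (Σ_{i=1}^C p^k_i λ_i) · ‖u − v‖ + (Σ_{i=1}^C |p^k_i − p_i|) · g_max(v). In particular, the difference of the weighted gradient sums splits into a Lipschitz term proportional to ‖u − v‖ and a term proportional to the total-variation-type distance Σ_i |p^k_i − p_i| between the client distribution and the population distribution. -/
/-- `g_max(w) = max_{1 ≤ i ≤ C} ‖G_i(w)‖`. -/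
noncomputable def gmax {W : Type*} [NormedAddCommGroup W] {C : ℕ} (hC : 0 < C)
    (G : Fin C → W → W) (w : W) : ℝ :=
  Finset.univ.sup' (Finset.univ_nonempty_iff.mpr ⟨⟨0, hC⟩⟩) fun i => ‖G i w‖

/-- The difference of the weighted gradient sums splits into a Lipschitz term
proportional to `‖u - v‖` and a term proportional to the total-variation-type
distance `Σ_i |p^k_i - p_i|` times `g_max(v)`. -/
theorem weighted_gradient_sum_diff_bound
    {W : Type*} [NormedAddCommGroup W] [NormedSpace ℝ W]
    {C : ℕ} (hC : 0 < C)
    (G : Fin C → W → W) (lam : Fin C → ℝ) (hlam : ∀ i, 0 ≤ lam i)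
    (hG : ∀ i (u v : W), ‖G i u - G i v‖ ≤ lam i * ‖u - v‖)
    (p : Fin C → ℝ) (hp : ∀ i, 0 ≤ p i) (hpsum : ∑ i, p i = 1)
    (pk : Fin C → ℝ) (hpk : ∀ i, 0 ≤ pk i) (hpksum : ∑ i, pk i = 1)
    (u v : W) :
    ‖(∑ i, pk i • G i u) - ∑ i, p i • G i v‖ ≤
      (∑ i, pk i * lam i) * ‖u - v‖ +
        (∑ i, |pk i - p i|) * gmax hC G v := by
  have key : (∑ i, pk i • G i u) - ∑ i, p i • G i v =
      (∑ i, pk i • (G i u - G i v)) + ∑ i, (pk i - p i) • G i v := by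
    rw [← Finset.sum_add_distrib, ← Finset.sum_sub_distrib]
    congr 1; ext i
    simp [smul_sub, sub_smul]
  rw [key]
  calc ‖(∑ i, pk i • (G i u - G i v)) + ∑ i, (pk i - p i) • G i v‖
      ≤ ‖∑ i, pk i • (G i u - G i v)‖ + ‖∑ i, (pk i - p i) • G i v‖ :=
        norm_add_le _ _
    _ ≤ (∑ i, pk i * lam i) * ‖u - v‖ + (∑ i, |pk i - p i|) * gmax hC G v := by
        gcongr
        · calc ‖∑ i, pk i • (G i u - G i v)‖ ≤ ∑ i, ‖pk i • (G i u - G i v)‖ :=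
              norm_sum_le _ _
            _ ≤ ∑ i, pk i * (lam i * ‖u - v‖) := by
              apply Finset.sum_le_sum
              intro i _
              rw [norm_smul, Real.norm_eq_abs, abs_of_nonneg (hpk i)]
              exact mul_le_mul_of_nonneg_left (hG i u v) (hpk i)
            _ = (∑ i, pk i * lam i) * ‖u - v‖ := by
              rw [Finset.sum_mul]; congr 1; ext i; ring
        · calc ‖∑ i, (pk i - p i) • G i v‖ ≤ ∑ i, ‖(pk i - p i) • G i v‖ :=
              norm_sum_le _ _
            _ ≤ ∑ i, |pk i - p i| * gmax hC G v := by
              apply Finset.sum_le_sum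
              intro i _
              rw [norm_smul, Real.norm_eq_abs]
              exact mul_le_mul_of_nonneg_left
                (Finset.le_sup' (fun j => ‖G j v‖) (Finset.mem_univ i)) (abs_nonneg _)
            _ = (∑ i, |pk i - p i|) * gmax hC G v := by rw [Finset.sum_mul]
end

section
/- For every t ≥ 1 and every client k, the local and centralized iterates satisfy the one-step divergence bound ‖w^k_t − w^c_t‖ ≤ a^k · ‖w^k_{t−1} − w^c_{t−1}‖ + η · (Σ_{i=1}^C |p^k_i − p_i|) · g_max(w^c_{t−1}). -/
open Finset

lemma norm_apply_le_gmax {W : Type*} [NormedAddCommGroup W] {C : ℕ} (hC : 0 < C)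
    (G : Fin C → W → W) (w : W) (i : Fin C) : ‖G i w‖ ≤ gmax hC G w :=
  le_sup' (fun i => ‖G i w‖) (mem_univ i)

section WeightedSums

variable {ι W : Type*} [NormedAddCommGroup W] [NormedSpace ℝ W] {s : Finset ι}

lemma norm_sum_smul_le_sum_abs_mul {c : ι → ℝ} {x : ι → W} {M : ℝ}
    (hx : ∀ i ∈ s, ‖x i‖ ≤ M) : ‖∑ i ∈ s, c i • x i‖ ≤ (∑ i ∈ s, |c i|) * M := by
  rw [sum_mul]
  refine norm_sum_le_of_le s fun i hi => ?_
  rw [norm_smul, Real.norm_eq_abs]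
  exact mul_le_mul_of_nonneg_left (hx i hi) (abs_nonneg _)

lemma norm_sum_smul_sub_sum_smul_le {q lam : ι → ℝ} {G : ι → W → W}
    (hq : ∀ i ∈ s, 0 ≤ q i) (hG : ∀ i ∈ s, ∀ u v, ‖G i u - G i v‖ ≤ lam i * ‖u - v‖)
    (u v : W) :
    ‖∑ i ∈ s, q i • G i u - ∑ i ∈ s, q i • G i v‖ ≤ (∑ i ∈ s, q i * lam i) * ‖u - v‖ := by
  rw [← sum_sub_distrib, sum_mul]
  refine norm_sum_le_of_le s fun i hi => ?_
  rw [← smul_sub, norm_smul, Real.norm_of_nonneg (hq i hi), mul_assoc]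
  exact mul_le_mul_of_nonneg_left (hG i hi u v) (hq i hi)

lemma norm_step_sub_step_le {q r lam : ι → ℝ} {G : ι → W → W} {η M : ℝ} (hη : 0 ≤ η)
    (hq : ∀ i ∈ s, 0 ≤ q i) (hG : ∀ i ∈ s, ∀ u v, ‖G i u - G i v‖ ≤ lam i * ‖u - v‖)
    {u v : W} (hM : ∀ i ∈ s, ‖G i v‖ ≤ M) :
    ‖(u - η • ∑ i ∈ s, q i • G i u) - (v - η • ∑ i ∈ s, r i • G i v)‖ ≤
      (1 + η * ∑ i ∈ s, q i * lam i) * ‖u - v‖ + η * (∑ i ∈ s, |q i - r i|) * M := by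
  have hsplit : (u - η • ∑ i ∈ s, q i • G i u) - (v - η • ∑ i ∈ s, r i • G i v) =
      (u - v) - η • (∑ i ∈ s, q i • G i u - ∑ i ∈ s, q i • G i v) -
        η • ∑ i ∈ s, (q i - r i) • G i v := by
    simp only [sub_smul, sum_sub_distrib, smul_sub]
    abel
  have hlip := norm_sum_smul_sub_sum_smul_le hq hG u v
  have hdrift := norm_sum_smul_le_sum_abs_mul (c := fun i => q i - r i) hM
  calc _ ≤ ‖u - v‖ + ‖η • (∑ i ∈ s, q i • G i u - ∑ i ∈ s, q i • G i v)‖ +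
          ‖η • ∑ i ∈ s, (q i - r i) • G i v‖ := by
        rw [hsplit]
        exact (norm_sub_le _ _).trans (add_le_add_left (norm_sub_le _ _) _)
    _ ≤ ‖u - v‖ + η * ((∑ i ∈ s, q i * lam i) * ‖u - v‖) +
          η * ((∑ i ∈ s, |q i - r i|) * M) := by
        simp only [norm_smul, Real.norm_of_nonneg hη]
        gcongr
    _ = _ := by ring

end WeightedSums

theorem one_step_weight_divergence_bound_general
    {W : Type*} [NormedAddCommGroup W] [NormedSpace ℝ W]
    {C : ℕ} (hC : 0 < C)
    (G : Fin C → W → W) (lam : Fin C → ℝ)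
    (hG : ∀ i (u v : W), ‖G i u - G i v‖ ≤ lam i * ‖u - v‖)
    (η : ℝ) (hη : 0 < η)
    (p : Fin C → ℝ)
    (pk : Fin C → ℝ) (hpk : ∀ i, 0 ≤ pk i)
    (wc wk : ℕ → W)
    (hwc : ∀ t : ℕ, 1 ≤ t → wc t = wc (t - 1) - η • ∑ i, p i • G i (wc (t - 1)))
    (hwk : ∀ t : ℕ, 1 ≤ t → wk t = wk (t - 1) - η • ∑ i, pk i • G i (wk (t - 1)))
    (t : ℕ) (ht : 1 ≤ t) :
    ‖wk t - wc t‖ ≤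
      (1 + η * ∑ i, pk i * lam i) * ‖wk (t - 1) - wc (t - 1)‖ +
        η * (∑ i, |pk i - p i|) * gmax hC G (wc (t - 1)) := by
  rw [hwk t ht, hwc t ht]
  exact norm_step_sub_step_le hη.le (fun i _ => hpk i) (fun i _ => hG i)
    (fun i _ => norm_apply_le_gmax hC G _ i)

/-- One-step divergence bound between the local SGD iterates of client `k`
and the centralized SGD iterates:
`‖w^k_t − w^c_t‖ ≤ a^k ‖w^k_{t−1} − w^c_{t−1}‖ + η (Σ_i |p^k_i − p_i|) g_max(w^c_{t−1})`
for every `t ≥ 1`. -/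
theorem one_step_weight_divergence_bound
    {W : Type*} [NormedAddCommGroup W] [NormedSpace ℝ W]
    {C : ℕ} (hC : 0 < C)
    (G : Fin C → W → W) (lam : Fin C → ℝ) (hlam : ∀ i, 0 ≤ lam i)
    (hG : ∀ i (u v : W), ‖G i u - G i v‖ ≤ lam i * ‖u - v‖)
    (η : ℝ) (hη : 0 < η)
    (p : Fin C → ℝ) (hp : ∀ i, 0 ≤ p i) (hpsum : ∑ i, p i = 1)
    (pk : Fin C → ℝ) (hpk : ∀ i, 0 ≤ pk i) (hpksum : ∑ i, pk i = 1)
    (wc wk : ℕ → W)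
    (hwc : ∀ t : ℕ, 1 ≤ t → wc t = wc (t - 1) - η • ∑ i, p i • G i (wc (t - 1)))
    (hwk : ∀ t : ℕ, 1 ≤ t → wk t = wk (t - 1) - η • ∑ i, pk i • G i (wk (t - 1)))
    (t : ℕ) (ht : 1 ≤ t) :
    ‖wk t - wc t‖ ≤
      (1 + η * ∑ i, pk i * lam i) * ‖wk (t - 1) - wc (t - 1)‖ +
        η * (∑ i, |pk i - p i|) * gmax hC G (wc (t - 1)) :=
  one_step_weight_divergence_bound_general hC G lam hG η hη p pk hpk wc wk hwc hwk t ht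
end

section
/- For every client k and every T ≥ 1, the local and centralized iterates satisfy the T-step divergence bound ‖w^k_T − w^c_T‖ ≤ (a^k)^T · ‖w^k_0 − w^c_0‖ + η · (Σ_{i=1}^C |p^k_i − p_i|) · Σ_{j=0}^{T−1} (a^k)^j · g_max(w^c_{T−1−j}). -/
/-- T-step divergence bound between local SGD iterates of client `k` and the
centralized SGD iterates:
`‖w^k_T − w^c_T‖ ≤ (a^k)^T ‖w^k_0 − w^c_0‖
  + η (Σ_i |p^k_i − p_i|) Σ_{j=0}^{T−1} (a^k)^j g_max(w^c_{T−1−j})`. -/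
theorem T_step_weight_divergence_bound
    {W : Type*} [NormedAddCommGroup W] [NormedSpace ℝ W]
    {C : ℕ} (hC : 0 < C)
    (G : Fin C → W → W) (lam : Fin C → ℝ) (hlam : ∀ i, 0 ≤ lam i)
    (hG : ∀ i (u v : W), ‖G i u - G i v‖ ≤ lam i * ‖u - v‖)
    (η : ℝ) (hη : 0 < η)
    (p : Fin C → ℝ) (hp : ∀ i, 0 ≤ p i) (hpsum : ∑ i, p i = 1)
    (pk : Fin C → ℝ) (hpk : ∀ i, 0 ≤ pk i) (hpksum : ∑ i, pk i = 1)
    (wc wk : ℕ → W)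
    (hwc : ∀ t : ℕ, 1 ≤ t → wc t = wc (t - 1) - η • ∑ i, p i • G i (wc (t - 1)))
    (hwk : ∀ t : ℕ, 1 ≤ t → wk t = wk (t - 1) - η • ∑ i, pk i • G i (wk (t - 1)))
    (T : ℕ) (hT : 1 ≤ T) :
    ‖wk T - wc T‖ ≤
      (1 + η * ∑ i, pk i * lam i) ^ T * ‖wk 0 - wc 0‖ +
        η * (∑ i, |pk i - p i|) *
          ∑ j ∈ Finset.range T,
            (1 + η * ∑ i, pk i * lam i) ^ j * gmax hC G (wc (T - 1 - j)) := by
  set a := 1 + η * ∑ i, pk i * lam i with ha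
  have hsl : 0 ≤ ∑ i, pk i * lam i :=
    Finset.sum_nonneg fun i _ => mul_nonneg (hpk i) (hlam i)
  have ha1 : 1 ≤ a := by nlinarith
  have ha0 : 0 ≤ a := by linarith
  have hgnn : ∀ w, 0 ≤ gmax hC G w := fun w =>
    le_trans (norm_nonneg (G ⟨0, hC⟩ w))
      (Finset.le_sup' (fun i => ‖G i w‖) (Finset.mem_univ ⟨0, hC⟩))
  have hBnn : 0 ≤ η * ∑ i, |pk i - p i| :=
    mul_nonneg hη.le (Finset.sum_nonneg fun i _ => abs_nonneg _)
  have step : ∀ t : ℕ, 1 ≤ t →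
      ‖wk t - wc t‖ ≤ a * ‖wk (t-1) - wc (t-1)‖
        + η * (∑ i, |pk i - p i|) * gmax hC G (wc (t-1)) := by
    intro t ht
    set u := wk (t-1) with hu
    set v := wc (t-1) with hv
    have key : wk t - wc t
        = (u - v) - η • (∑ i, pk i • (G i u - G i v))
          - η • (∑ i, (pk i - p i) • G i v) := by
      have e1 : (∑ i, pk i • (G i u - G i v)) + ∑ i, (pk i - p i) • G i v
          = (∑ i, pk i • G i u) - ∑ i, p i • G i v := by
        rw [← Finset.sum_add_distrib, ← Finset.sum_sub_distrib]
        refine Finset.sum_congr rfl fun i _ => ?_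
        rw [smul_sub, sub_smul]; abel
      have e2 : η • (∑ i, pk i • (G i u - G i v)) + η • (∑ i, (pk i - p i) • G i v)
          = η • (∑ i, pk i • G i u) - η • (∑ i, p i • G i v) := by
        rw [← smul_add, e1, smul_sub]
      rw [hwk t ht, hwc t ht, ← hu, ← hv, sub_sub (u - v), e2]
      abel
    have h1 : ‖∑ i, pk i • (G i u - G i v)‖ ≤ (∑ i, pk i * lam i) * ‖u - v‖ := by
      calc ‖∑ i, pk i • (G i u - G i v)‖ ≤ ∑ i, ‖pk i • (G i u - G i v)‖ :=
            norm_sum_le _ _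
        _ ≤ ∑ i, pk i * (lam i * ‖u - v‖) := by
            refine Finset.sum_le_sum fun i _ => ?_
            rw [norm_smul, Real.norm_eq_abs, abs_of_nonneg (hpk i)]
            exact mul_le_mul_of_nonneg_left (hG i u v) (hpk i)
        _ = (∑ i, pk i * lam i) * ‖u - v‖ := by
            rw [Finset.sum_mul]; exact Finset.sum_congr rfl fun i _ => by ring
    have h2 : ‖∑ i, (pk i - p i) • G i v‖ ≤ (∑ i, |pk i - p i|) * gmax hC G v := by
      calc ‖∑ i, (pk i - p i) • G i v‖ ≤ ∑ i, ‖(pk i - p i) • G i v‖ :=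
            norm_sum_le _ _
        _ ≤ ∑ i, |pk i - p i| * gmax hC G v := by
            refine Finset.sum_le_sum fun i _ => ?_
            rw [norm_smul, Real.norm_eq_abs]
            exact mul_le_mul_of_nonneg_left
              (Finset.le_sup' (fun i => ‖G i v‖) (Finset.mem_univ i)) (abs_nonneg _)
        _ = (∑ i, |pk i - p i|) * gmax hC G v := by rw [Finset.sum_mul]
    calc ‖wk t - wc t‖
        ≤ ‖(u - v) - η • (∑ i, pk i • (G i u - G i v))‖
            + ‖η • (∑ i, (pk i - p i) • G i v)‖ := by rw [key]; exact norm_sub_le _ _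
      _ ≤ ‖u - v‖ + ‖η • (∑ i, pk i • (G i u - G i v))‖
            + ‖η • (∑ i, (pk i - p i) • G i v)‖ := by
          gcongr; exact norm_sub_le _ _
      _ ≤ ‖u - v‖ + η * ((∑ i, pk i * lam i) * ‖u - v‖)
            + η * ((∑ i, |pk i - p i|) * gmax hC G v) := by
          rw [norm_smul, norm_smul, Real.norm_eq_abs, abs_of_pos hη]
          gcongr
      _ = a * ‖u - v‖ + η * (∑ i, |pk i - p i|) * gmax hC G v := by rw [ha]; ring
  induction T, hT using Nat.le_induction with
  | base =>
      have := step 1 le_rfl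
      simpa [Finset.sum_range_one] using this
  | succ n hn ih =>
      have h1 := step (n+1) (by omega)
      rw [Nat.add_sub_cancel] at h1
      simp only [show ∀ j : ℕ, n - 1 - j = n - (j+1) from fun j => by omega] at ih
      have hs : a * ∑ j ∈ Finset.range n, a ^ j * gmax hC G (wc (n - (j+1)))
          = ∑ j ∈ Finset.range n, a ^ (j+1) * gmax hC G (wc (n - (j+1))) := by
        rw [Finset.mul_sum]; exact Finset.sum_congr rfl fun j _ => by ring
      rw [Finset.sum_range_succ']
      simp only [Nat.add_sub_cancel, Nat.sub_zero, pow_zero, one_mul]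
      calc ‖wk (n+1) - wc (n+1)‖
          ≤ a * ‖wk n - wc n‖ + η * (∑ i, |pk i - p i|) * gmax hC G (wc n) := h1
        _ ≤ a * (a ^ n * ‖wk 0 - wc 0‖ +
              η * (∑ i, |pk i - p i|) *
                ∑ j ∈ Finset.range n, a ^ j * gmax hC G (wc (n - (j+1))))
              + η * (∑ i, |pk i - p i|) * gmax hC G (wc n) := by
            gcongr
        _ = a ^ (n+1) * ‖wk 0 - wc 0‖ +
              η * (∑ i, |pk i - p i|) *
                ((∑ j ∈ Finset.range n, a ^ (j+1) * gmax hC G (wc (n - (j+1))))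
                  + gmax hC G (wc n)) := by
            rw [← hs]; ring
end

section
/- (First-round corollary of Proposition 1) Suppose all K clients and the centralized process start from the same initial weight, i.e. w^k_0 = w^c_0 for all k, each client runs T local SGD steps, and the federated weight after the first synchronization is w^f_T = Σ_{k=1}^K (n^k / Σ_{k'} n^{k'}) · w^k_T. Then ‖w^f_T − w^c_T‖ ≤ η Σ_{k=1}^K (n^k / Σ_{k'} n^{k'}) (Σ_{i=1}^C |p^k_i − p_i|) Σ_{j=0}^{T−1} (a^k)^j g_max(w^c_{T−1−j}); that is, with identical initialization the weight divergence after the first synchronization is controlled entirely by the clients' earth mover's distances Σ_i |p^k_i − p_i| to the population distribution. -/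
/-- First-round corollary of Proposition 1: with identical initialization
`w^k_0 = w^c_0` for all clients, the weight divergence after the first
synchronization is controlled entirely by the clients' earth mover's
distances to the population distribution:
`‖w^f_T − w^c_T‖ ≤ η Σ_k (n^k/Σ n^{k'}) (Σ_i |p^k_i − p_i|)
   Σ_{j=0}^{T−1} (a^k)^j g_max(w^c_{T−1−j})`. -/
theorem fedavg_first_round_divergence_bound
    {W : Type*} [NormedAddCommGroup W] [NormedSpace ℝ W]
    {C K : ℕ} (hC : 0 < C) (hK : 0 < K)
    (G : Fin C → W → W) (lam : Fin C → ℝ) (hlam : ∀ i, 0 ≤ lam i)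
    (hG : ∀ i (u v : W), ‖G i u - G i v‖ ≤ lam i * ‖u - v‖)
    (η : ℝ) (hη : 0 < η)
    (p : Fin C → ℝ) (hp : ∀ i, 0 ≤ p i) (hpsum : ∑ i, p i = 1)
    (pk : Fin K → Fin C → ℝ) (hpk : ∀ k i, 0 ≤ pk k i)
    (hpksum : ∀ k, ∑ i, pk k i = 1)
    (n : Fin K → ℝ) (hn : ∀ k, 0 < n k)
    (T : ℕ) (hT : 1 ≤ T)
    (wc : ℕ → W)
    (hwc : ∀ t : ℕ, t < T → wc (t + 1) = wc t - η • ∑ i, p i • G i (wc t))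
    (wk : Fin K → ℕ → W)
    -- all clients start from the same initial weight as the centralized process
    (hwk0 : ∀ k, wk k 0 = wc 0)
    (hwk : ∀ k, ∀ t : ℕ, t < T →
      wk k (t + 1) = wk k t - η • ∑ i, pk k i • G i (wk k t))
    -- the federated weight after the first synchronization
    (wf : W)
    (hwf : wf = ∑ k, (n k / ∑ k', n k') • wk k T) :
    ‖wf - wc T‖ ≤
      η * ∑ k, (n k / ∑ k', n k') * (∑ i, |pk k i - p i|) *
        ∑ j ∈ Finset.range T,
          (1 + η * ∑ i, pk k i * lam i) ^ j * gmax hC G (wc (T - 1 - j)) := by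
  have hgle : ∀ i w, ‖G i w‖ ≤ gmax hC G w :=
    fun i w => Finset.le_sup' (fun i => ‖G i w‖) (Finset.mem_univ i)
  have hg0 : ∀ w, 0 ≤ gmax hC G w := fun w =>
    le_trans (norm_nonneg _) (hgle ⟨0, hC⟩ w)
  -- per-client divergence bound
  have key : ∀ k, ∀ t, t ≤ T → ‖wk k t - wc t‖ ≤
      η * (∑ i, |pk k i - p i|) * ∑ j ∈ Finset.range t,
        (1 + η * ∑ i, pk k i * lam i) ^ j * gmax hC G (wc (t - 1 - j)) := by
    intro k t
    induction t with
    | zero => intro _; simp [hwk0]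
    | succ t ih =>
      intro ht
      have ht' : t < T := ht
      have iht := ih (le_of_lt ht')
      set a : ℝ := 1 + η * ∑ i, pk k i * lam i with ha
      have hsl : 0 ≤ ∑ i, pk k i * lam i :=
        Finset.sum_nonneg fun i _ => mul_nonneg (hpk k i) (hlam i)
      have ha1 : 1 ≤ a := by
        have := mul_nonneg hη.le hsl
        simp only [ha]; linarith
      have ha0 : 0 ≤ a := by linarith
      set E : ℝ := ∑ i, |pk k i - p i| with hE
      have hE0 : 0 ≤ E := Finset.sum_nonneg fun i _ => abs_nonneg _
      set X : W := wk k t - wc t with hX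
      have step : ‖wk k (t+1) - wc (t+1)‖ ≤ a * ‖X‖ + η * E * gmax hC G (wc t) := by
        rw [hwk k t ht', hwc t ht']
        have h1 : (∑ i, pk k i • G i (wk k t))
            = (∑ i, pk k i • (G i (wk k t) - G i (wc t))) + ∑ i, (pk k i - p i) • G i (wc t)
              + ∑ i, p i • G i (wc t) := by
          rw [← Finset.sum_add_distrib, ← Finset.sum_add_distrib]
          refine Finset.sum_congr rfl fun i _ => ?_
          rw [smul_sub, sub_smul]; abel
        have h2 : wk k t - η • ∑ i, pk k i • G i (wk k t)
            - (wc t - η • ∑ i, p i • G i (wc t))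
            = X - η • (∑ i, pk k i • (G i (wk k t) - G i (wc t)))
              - η • (∑ i, (pk k i - p i) • G i (wc t)) := by
          rw [h1, smul_add, smul_add, hX]; abel
        rw [h2]
        have hA : ‖∑ i, pk k i • (G i (wk k t) - G i (wc t))‖
            ≤ (∑ i, pk k i * lam i) * ‖X‖ := by
          calc ‖∑ i, pk k i • (G i (wk k t) - G i (wc t))‖
              ≤ ∑ i, ‖pk k i • (G i (wk k t) - G i (wc t))‖ := norm_sum_le _ _
            _ ≤ ∑ i, pk k i * lam i * ‖X‖ := by
                refine Finset.sum_le_sum fun i _ => ?_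
                rw [norm_smul, Real.norm_eq_abs, abs_of_nonneg (hpk k i), mul_assoc]
                exact mul_le_mul_of_nonneg_left (hG i _ _) (hpk k i)
            _ = (∑ i, pk k i * lam i) * ‖X‖ := by rw [← Finset.sum_mul]
        have hB : ‖∑ i, (pk k i - p i) • G i (wc t)‖ ≤ E * gmax hC G (wc t) := by
          calc ‖∑ i, (pk k i - p i) • G i (wc t)‖
              ≤ ∑ i, ‖(pk k i - p i) • G i (wc t)‖ := norm_sum_le _ _
            _ ≤ ∑ i, |pk k i - p i| * gmax hC G (wc t) := by
                refine Finset.sum_le_sum fun i _ => ?_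
                rw [norm_smul, Real.norm_eq_abs]
                exact mul_le_mul_of_nonneg_left (hgle i _) (abs_nonneg _)
            _ = E * gmax hC G (wc t) := by rw [← Finset.sum_mul]
        calc ‖X - η • (∑ i, pk k i • (G i (wk k t) - G i (wc t)))
              - η • (∑ i, (pk k i - p i) • G i (wc t))‖
            ≤ ‖X - η • (∑ i, pk k i • (G i (wk k t) - G i (wc t)))‖
              + ‖η • (∑ i, (pk k i - p i) • G i (wc t))‖ := norm_sub_le _ _
          _ ≤ ‖X‖ + ‖η • (∑ i, pk k i • (G i (wk k t) - G i (wc t)))‖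
              + ‖η • (∑ i, (pk k i - p i) • G i (wc t))‖ := by
                have := norm_sub_le X (η • (∑ i, pk k i • (G i (wk k t) - G i (wc t))))
                linarith
          _ ≤ a * ‖X‖ + η * E * gmax hC G (wc t) := by
                rw [norm_smul, norm_smul, Real.norm_eq_abs, abs_of_pos hη]
                have h3 : η * ‖∑ i, pk k i • (G i (wk k t) - G i (wc t))‖
                    ≤ η * ((∑ i, pk k i * lam i) * ‖X‖) :=
                  mul_le_mul_of_nonneg_left hA hη.le
                have h4 : η * ‖∑ i, (pk k i - p i) • G i (wc t)‖
                    ≤ η * (E * gmax hC G (wc t)) :=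
                  mul_le_mul_of_nonneg_left hB hη.le
                simp only [ha]; nlinarith [norm_nonneg X]
      have hsum : ∑ j ∈ Finset.range (t+1), a ^ j * gmax hC G (wc (t + 1 - 1 - j))
          = a * (∑ j ∈ Finset.range t, a ^ j * gmax hC G (wc (t - 1 - j)))
            + gmax hC G (wc t) := by
        rw [Finset.sum_range_succ']
        simp only [pow_zero, one_mul, pow_succ']
        rw [Finset.mul_sum]
        congr 1
        refine Finset.sum_congr rfl fun j _ => ?_
        have : t + 1 - 1 - (j + 1) = t - 1 - j := by omega
        rw [this]; ring
      calc ‖wk k (t+1) - wc (t+1)‖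
          ≤ a * ‖X‖ + η * E * gmax hC G (wc t) := step
        _ ≤ a * (η * E * ∑ j ∈ Finset.range t, a ^ j * gmax hC G (wc (t - 1 - j)))
            + η * E * gmax hC G (wc t) := by
              have := mul_le_mul_of_nonneg_left iht ha0
              linarith
        _ = η * E * ∑ j ∈ Finset.range (t+1), a ^ j * gmax hC G (wc (t + 1 - 1 - j)) := by
              rw [hsum]; ring
  -- combine clients
  have hS : 0 < ∑ k', n k' :=
    Finset.sum_pos (fun k _ => hn k) ⟨⟨0, hK⟩, Finset.mem_univ _⟩
  have hcsum : ∑ k, n k / ∑ k', n k' = 1 := by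
    rw [← Finset.sum_div, div_self hS.ne']
  have hdiff : wf - wc T = ∑ k, (n k / ∑ k', n k') • (wk k T - wc T) := by
    rw [hwf]
    calc (∑ k, (n k / ∑ k', n k') • wk k T) - wc T
        = (∑ k, (n k / ∑ k', n k') • wk k T) - (∑ k, n k / ∑ k', n k') • wc T := by
          rw [hcsum, one_smul]
      _ = ∑ k, (n k / ∑ k', n k') • (wk k T - wc T) := by
          rw [Finset.sum_smul, ← Finset.sum_sub_distrib]
          refine Finset.sum_congr rfl fun k _ => ?_
          rw [smul_sub]
  rw [hdiff, Finset.mul_sum]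
  calc ‖∑ k, (n k / ∑ k', n k') • (wk k T - wc T)‖
      ≤ ∑ k, ‖(n k / ∑ k', n k') • (wk k T - wc T)‖ := norm_sum_le _ _
    _ ≤ ∑ k, η * ((n k / ∑ k', n k') * (∑ i, |pk k i - p i|) *
          ∑ j ∈ Finset.range T,
            (1 + η * ∑ i, pk k i * lam i) ^ j * gmax hC G (wc (T - 1 - j))) := by
        refine Finset.sum_le_sum fun k _ => ?_
        have hc0 : 0 ≤ n k / ∑ k', n k' := div_nonneg (hn k).le hS.le
        rw [norm_smul, Real.norm_eq_abs, abs_of_nonneg hc0]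
        calc (n k / ∑ k', n k') * ‖wk k T - wc T‖
            ≤ (n k / ∑ k', n k') * (η * (∑ i, |pk k i - p i|) *
                ∑ j ∈ Finset.range T,
                  (1 + η * ∑ i, pk k i * lam i) ^ j * gmax hC G (wc (T - 1 - j))) :=
              mul_le_mul_of_nonneg_left (key k T le_rfl) hc0
          _ = _ := by ring
end
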